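/- Let N ≥ 2 and let n_1, …, n_N be positive integers, V_u > 0 a real number, g ∈ ℝ^{n_N}. Let A₁ be an n_N×n_1 real matrix and, for l = 2, …, N, let B_l be an n_{l−1}×n_l real matrix. Suppose vectors β^{l*} ∈ ℝ^{n_l} (l = 1, …, N) satisfy β^{N*} = φ((1/V_u)·A₁·β^{1*} + g) and β^{l*} = φ((1/V_u)·B_{l+1}·β^{(l+1)*}) for l = N−1, …, 1. If there exists λ < 1 such that ‖A₁‖_∞ ≤ λ·V_u, ‖B_l‖_∞ ≤ λ·V_u for l = 2, …, N, and ‖g‖_∞ ≤ 1 − λ^N, then all the clamps are inactive: β^{N*} = (1/V_u)^N·A₁·B₂·B₃·⋯·B_N·β^{N*} + g, i.e. β^{N*} solves the linear system ((1/V_u)^N·A₁·B₂·⋯·B_N − I)·β + g = 0, and for each l = 1, …, N−1, β^{l*} = (1/V_u)^{N−l}·B_{l+1}·B_{l+2}·⋯·B_N·β^{N*}. Moreover, if additionally ‖A₁‖₂·‖B_N‖₂·⋯·‖B₂‖₂ < V_u^N, then β^{N*} is the unique solution of that linear system. -/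

import Mathlib

/-- Euclidean norm of a vector in `ℝ^n`. -/
noncomputable def l2norm {n : ℕ} (x : Fin n → ℝ) : ℝ := Real.sqrt (∑ i, (x i) ^ 2)

/-- Operator norm of a matrix with respect to Euclidean norms, `‖A‖₂`. -/
noncomputable def l2OpNorm {m n : ℕ} (A : Matrix (Fin m) (Fin n) ℝ) : ℝ :=
  sInf {c : ℝ | 0 ≤ c ∧ ∀ x : Fin n → ℝ, l2norm (A.mulVec x) ≤ c * l2norm x}

/-- Sup norm `‖x‖_∞ = max_i |x_i|`. -/
noncomputable def supNorm {n : ℕ} (x : Fin n → ℝ) : ℝ := ⨆ i, |x i|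

/-- Operator norm of a matrix with respect to sup norms, `‖A‖_∞`. -/
noncomputable def supOpNorm {m n : ℕ} (A : Matrix (Fin m) (Fin n) ℝ) : ℝ :=
  sInf {c : ℝ | 0 ≤ c ∧ ∀ x : Fin n → ℝ, supNorm (A.mulVec x) ≤ c * supNorm x}

/-- Coordinatewise clamp `φ(x)_i = min(1, max(−1, x_i))`. -/
noncomputable def clamp1 {n : ℕ} (x : Fin n → ℝ) : Fin n → ℝ := fun i => min 1 (max (-1) (x i))

/-- `prodFrom N n B l` is the matrix product `B_{l+1} ⬝ B_{l+2} ⬝ ⋯ ⬝ B_N`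
(the identity matrix when `l = N`). -/
noncomputable def prodFrom (N : ℕ) (n : ℕ → ℕ)
    (B : (l : ℕ) → Matrix (Fin (n (l - 1))) (Fin (n l)) ℝ)
    (l : ℕ) : Matrix (Fin (n l)) (Fin (n N)) ℝ :=
  if h : l < N then
    (B (l + 1)) * prodFrom N n B (l + 1)
  else
    Matrix.of fun i j => if (i : ℕ) = (j : ℕ) then (1 : ℝ) else 0
termination_by N - l
decreasing_by omega

/-!
Going backward from the last layer, each layer multiplies the sup norm by at most `λ`, so
`‖β^l‖_∞ ≤ λ ^ (N - l) ≤ 1` and no clamp of an intermediate layer is active; at the top,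
`‖A₁ β¹ / V_u‖_∞ ≤ λ ^ N` together with `‖g‖_∞ ≤ 1 - λ ^ N` keeps the last clamp inactive as well.
Unrolling the resulting linear recursions gives the chain formulas and the fixed-point identity.
The difference of two solutions is fixed by `(1 / V_u) ^ N A₁ B₂ ⋯ B_N`, whose `ℓ²` operator norm
is `< 1` by submultiplicativity, so it vanishes.
-/

lemma supNorm_eq_norm {n : ℕ} (x : Fin n → ℝ) : supNorm x = ‖x‖ := by
  refine le_antisymm (Real.iSup_le (fun i => ?_) (norm_nonneg x)) ?_
  · simpa only [Real.norm_eq_abs] using norm_le_pi_norm x i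
  · refine (pi_norm_le_iff_of_nonneg (Real.iSup_nonneg fun i => abs_nonneg (x i))).2 fun i => ?_
    simpa only [Real.norm_eq_abs] using le_ciSup (Finite.bddAbove_range fun j => |x j|) i

lemma supNorm_clamp1_le_one {n : ℕ} (x : Fin n → ℝ) : supNorm (clamp1 x) ≤ 1 :=
  Real.iSup_le (fun i => abs_le.2 ⟨le_min (by norm_num) (le_max_left _ _), min_le_left _ _⟩)
    zero_le_one

lemma clamp1_eq_self {n : ℕ} {x : Fin n → ℝ} (hx : supNorm x ≤ 1) : clamp1 x = x := by
  funext i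
  obtain ⟨hlo, hhi⟩ := abs_le.1 ((norm_le_pi_norm x i).trans (supNorm_eq_norm x ▸ hx))
  simp only [clamp1, max_eq_right hlo, min_eq_right hhi]

section SupOperatorNorm

open scoped Matrix.Norms.Operator

lemma supOpNorm_eq_norm {m n : ℕ} (A : Matrix (Fin m) (Fin n) ℝ) : supOpNorm A = ‖A‖ := by
  rw [Matrix.linfty_opNorm_eq_opNorm, ContinuousLinearMap.norm_def]
  simp only [supOpNorm, supNorm_eq_norm]
  rfl

lemma supOpNorm_nonneg {m n : ℕ} (A : Matrix (Fin m) (Fin n) ℝ) : 0 ≤ supOpNorm A :=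
  supOpNorm_eq_norm A ▸ norm_nonneg A

lemma supNorm_smul_mulVec_le {m n : ℕ} {A : Matrix (Fin m) (Fin n) ℝ} {Vu lam r : ℝ}
    (hVu : 0 < Vu) (hA : supOpNorm A ≤ lam * Vu) {x : Fin n → ℝ} (hx : supNorm x ≤ r) :
    supNorm ((1 / Vu) • A.mulVec x) ≤ lam * r := by
  rw [supOpNorm_eq_norm] at hA
  rw [supNorm_eq_norm] at hx ⊢
  calc ‖(1 / Vu) • A.mulVec x‖ = (1 / Vu) * ‖A.mulVec x‖ := by
        rw [norm_smul, Real.norm_of_nonneg (by positivity)]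
    _ ≤ (1 / Vu) * ((lam * Vu) * r) := by
        gcongr
        exact (Matrix.linfty_opNorm_mulVec A x).trans
          (mul_le_mul hA hx (norm_nonneg x) ((norm_nonneg A).trans hA))
    _ = lam * r := by field_simp

end SupOperatorNorm

section L2OperatorNorm

lemma l2norm_eq_norm {n : ℕ} (x : Fin n → ℝ) :
    l2norm x = ‖(WithLp.toLp 2 x : EuclideanSpace ℝ (Fin n))‖ := by
  simp [l2norm, EuclideanSpace.norm_eq]

open scoped Matrix.Norms.L2Operator

lemma l2OpNorm_eq_norm {m n : ℕ} (A : Matrix (Fin m) (Fin n) ℝ) : l2OpNorm A = ‖A‖ := by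
  rw [Matrix.l2_opNorm_def, ContinuousLinearMap.norm_def]
  simp only [l2OpNorm, l2norm_eq_norm]
  congr! 4 with c
  exact ⟨fun h x => h x.ofLp, fun h x => h (WithLp.toLp 2 x)⟩

lemma l2OpNorm_nonneg {m n : ℕ} (A : Matrix (Fin m) (Fin n) ℝ) : 0 ≤ l2OpNorm A :=
  l2OpNorm_eq_norm A ▸ norm_nonneg A

lemma l2OpNorm_mul_le {m n k : ℕ} (A : Matrix (Fin m) (Fin n) ℝ) (C : Matrix (Fin n) (Fin k) ℝ) :
    l2OpNorm (A * C) ≤ l2OpNorm A * l2OpNorm C := by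
  simpa only [l2OpNorm_eq_norm] using Matrix.l2_opNorm_mul A C

lemma l2OpNorm_one_le {k : ℕ} : l2OpNorm (1 : Matrix (Fin k) (Fin k) ℝ) ≤ 1 := by
  rw [l2OpNorm_eq_norm, Matrix.l2_opNorm_def]
  exact ContinuousLinearMap.opNorm_le_bound _ zero_le_one fun x => by simp

lemma eq_of_eq_smul_mulVec_add {m : ℕ} {M : Matrix (Fin m) (Fin m) ℝ} {c : ℝ}
    (hc : |c| * l2OpNorm M < 1) {g x y : Fin m → ℝ}
    (hx : x = c • M.mulVec x + g) (hy : y = c • M.mulVec y + g) : x = y := by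
  have hd : x - y = c • M.mulVec (x - y) := by
    conv_lhs => rw [hx, hy]
    rw [Matrix.mulVec_sub, smul_sub]
    abel
  set d : EuclideanSpace ℝ (Fin m) := WithLp.toLp 2 (x - y)
  have hle : ‖d‖ ≤ |c| * l2OpNorm M * ‖d‖ := by
    calc ‖d‖ = |c| * ‖(WithLp.toLp 2 (M.mulVec (x - y)) : EuclideanSpace ℝ (Fin m))‖ := by
          rw [← Real.norm_eq_abs, ← norm_smul, ← WithLp.toLp_smul, ← hd]
      _ ≤ |c| * (l2OpNorm M * ‖d‖) := by
          gcongr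
          rw [l2OpNorm_eq_norm]
          exact Matrix.l2_opNorm_mulVec M d
      _ = |c| * l2OpNorm M * ‖d‖ := (mul_assoc _ _ _).symm
  have hd0 : ‖d‖ = 0 := by nlinarith [norm_nonneg d]
  rw [norm_eq_zero] at hd0
  exact sub_eq_zero.1 (congrArg WithLp.ofLp hd0)

end L2OperatorNorm

section prodFrom

variable {N : ℕ} {n : ℕ → ℕ} {B : (l : ℕ) → Matrix (Fin (n (l - 1))) (Fin (n l)) ℝ}

lemma prodFrom_of_lt {l : ℕ} (h : l < N) :
    prodFrom N n B l = B (l + 1) * prodFrom N n B (l + 1) := by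
  rw [prodFrom, dif_pos h]

lemma prodFrom_self : prodFrom N n B N = 1 := by
  rw [prodFrom, dif_neg (lt_irrefl N)]
  ext i j
  simp only [Matrix.of_apply, Matrix.one_apply, Fin.val_eq_val]

lemma l2OpNorm_prodFrom_le {l : ℕ} (hl : l ≤ N) :
    l2OpNorm (prodFrom N n B l) ≤ ∏ j ∈ Finset.Icc (l + 1) N, l2OpNorm (B j) := by
  induction hl using Nat.decreasingInduction with
  | self => simpa [prodFrom_self] using l2OpNorm_one_le
  | of_succ k hk ih =>
    rw [prodFrom_of_lt hk, ← Finset.insert_Icc_add_one_left_eq_Icc (by omega : k + 1 ≤ N),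
      Finset.prod_insert (by simp)]
    exact (l2OpNorm_mul_le _ _).trans (by gcongr; exact l2OpNorm_nonneg _)

lemma supNorm_le_and_eq_prodFrom_mulVec {Vu lam : ℝ} (hVu : 0 < Vu) (hlam0 : 0 ≤ lam)
    (hlam1 : lam ≤ 1) (hB : ∀ l, 2 ≤ l → l ≤ N → supOpNorm (B l) ≤ lam * Vu)
    {β : (l : ℕ) → Fin (n l) → ℝ} (hβN : supNorm (β N) ≤ 1)
    (hfix : ∀ l, 1 ≤ l → l ≤ N - 1 → β l = clamp1 ((1 / Vu) • (B (l + 1)).mulVec (β (l + 1))))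
    {l : ℕ} (hl1 : 1 ≤ l) (hlN : l ≤ N) :
    supNorm (β l) ≤ lam ^ (N - l) ∧
      β l = (1 / Vu) ^ (N - l) • (prodFrom N n B l).mulVec (β N) := by
  induction hlN using Nat.decreasingInduction with
  | self => simp [prodFrom_self, hβN]
  | of_succ k hk ih =>
    obtain ⟨hbound, heq⟩ := ih (by omega)
    have hexp : N - k = N - (k + 1) + 1 := by omega
    have hlayer : supNorm ((1 / Vu) • (B (k + 1)).mulVec (β (k + 1))) ≤ lam ^ (N - k) := by
      rw [hexp, pow_succ']
      exact supNorm_smul_mulVec_le hVu (hB (k + 1) (by omega) (by omega)) hbound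
    have hk_eq : β k = (1 / Vu) • (B (k + 1)).mulVec (β (k + 1)) := by
      rw [hfix k hl1 (by omega)]
      exact clamp1_eq_self (hlayer.trans (pow_le_one₀ hlam0 hlam1))
    refine ⟨hk_eq ▸ hlayer, ?_⟩
    rw [hk_eq, heq, Matrix.mulVec_smul, smul_smul, Matrix.mulVec_mulVec, ← prodFrom_of_lt hk,
      hexp, pow_succ']

end prodFrom

theorem stmt3_general (N : ℕ) (hN : 2 ≤ N) (n : ℕ → ℕ)
    (Vu : ℝ) (hVu : 0 < Vu)
    (A1 : Matrix (Fin (n N)) (Fin (n 1)) ℝ)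
    (B : (l : ℕ) → Matrix (Fin (n (l - 1))) (Fin (n l)) ℝ)
    (g : Fin (n N) → ℝ)
    (βstar : (l : ℕ) → Fin (n l) → ℝ)
    (hfixN : βstar N = clamp1 ((1 / Vu) • A1.mulVec (βstar 1) + g))
    (hfixl : ∀ l, 1 ≤ l → l ≤ N - 1 →
      βstar l = (clamp1 ((1 / Vu) • (B (l + 1)).mulVec (βstar (l + 1))) : Fin (n l) → ℝ))
    (lam : ℝ) (hlam : lam < 1)
    (hA1 : supOpNorm A1 ≤ lam * Vu)
    (hB : ∀ l, 2 ≤ l → l ≤ N → supOpNorm (B l) ≤ lam * Vu)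
    (hg : supNorm g ≤ 1 - lam ^ N) :
    (βstar N = (1 / Vu) ^ N • (A1 * prodFrom N n B 1).mulVec (βstar N) + g) ∧
    (∀ l, 1 ≤ l → l ≤ N - 1 →
      βstar l = (1 / Vu) ^ (N - l) • (prodFrom N n B l).mulVec (βstar N)) ∧
    (l2OpNorm A1 * ∏ l ∈ Finset.Icc 2 N, l2OpNorm (B l) < Vu ^ N →
      ∀ y : Fin (n N) → ℝ,
        y = (1 / Vu) ^ N • (A1 * prodFrom N n B 1).mulVec y + g → y = βstar N) := by
  have hlam0 : 0 ≤ lam := nonneg_of_mul_nonneg_left ((supOpNorm_nonneg A1).trans hA1) hVu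
  have hβN : supNorm (βstar N) ≤ 1 := hfixN ▸ supNorm_clamp1_le_one _
  have layers := fun l =>
    supNorm_le_and_eq_prodFrom_mulVec (l := l) hVu hlam0 hlam.le hB hβN hfixl
  obtain ⟨hβ1_bound, hβ1_eq⟩ := layers 1 le_rfl (by omega)
  have hpow : lam * lam ^ (N - 1) = lam ^ N := by rw [← pow_succ']; congr 1; omega
  have hN_eq : βstar N = (1 / Vu) • A1.mulVec (βstar 1) + g := by
    refine hfixN.trans (clamp1_eq_self ?_)
    have := supNorm_smul_mulVec_le hVu hA1 hβ1_bound
    rw [supNorm_eq_norm] at this hg ⊢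
    linarith [norm_add_le ((1 / Vu) • A1.mulVec (βstar 1)) g]
  have hfix : βstar N = (1 / Vu) ^ N • (A1 * prodFrom N n B 1).mulVec (βstar N) + g := by
    conv_lhs => rw [hN_eq, hβ1_eq]
    rw [Matrix.mulVec_smul, smul_smul, Matrix.mulVec_mulVec, ← pow_succ',
      Nat.sub_add_cancel (by omega : 1 ≤ N)]
  refine ⟨hfix, fun l hl1 hlN => (layers l hl1 (by omega)).2, fun hlt y hy => ?_⟩
  refine eq_of_eq_smul_mulVec_add ?_ hy hfix
  have hprod := l2OpNorm_prodFrom_le (B := B) (by omega : 1 ≤ N)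
  calc |(1 / Vu) ^ N| * l2OpNorm (A1 * prodFrom N n B 1)
      ≤ (1 / Vu) ^ N * (l2OpNorm A1 * ∏ l ∈ Finset.Icc 2 N, l2OpNorm (B l)) := by
        rw [abs_of_pos (by positivity)]
        gcongr
        exact (l2OpNorm_mul_le _ _).trans (by gcongr; exact l2OpNorm_nonneg _)
    _ < (1 / Vu) ^ N * Vu ^ N := by gcongr
    _ = 1 := by rw [← mul_pow, one_div_mul_cancel hVu.ne', one_pow]

theorem stmt3 (N : ℕ) (hN : 2 ≤ N) (n : ℕ → ℕ) (hn : ∀ l, 1 ≤ l → l ≤ N → 0 < n l)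
    (Vu : ℝ) (hVu : 0 < Vu)
    (A1 : Matrix (Fin (n N)) (Fin (n 1)) ℝ)
    (B : (l : ℕ) → Matrix (Fin (n (l - 1))) (Fin (n l)) ℝ)
    (g : Fin (n N) → ℝ)
    (βstar : (l : ℕ) → Fin (n l) → ℝ)
    (hfixN : βstar N = clamp1 ((1 / Vu) • A1.mulVec (βstar 1) + g))
    (hfixl : ∀ l, 1 ≤ l → l ≤ N - 1 →
      βstar l = (clamp1 ((1 / Vu) • (B (l + 1)).mulVec (βstar (l + 1))) : Fin (n l) → ℝ))
    (lam : ℝ) (hlam : lam < 1)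
    (hA1 : supOpNorm A1 ≤ lam * Vu)
    (hB : ∀ l, 2 ≤ l → l ≤ N → supOpNorm (B l) ≤ lam * Vu)
    (hg : supNorm g ≤ 1 - lam ^ N) :
    (βstar N = (1 / Vu) ^ N • (A1 * prodFrom N n B 1).mulVec (βstar N) + g) ∧
    (∀ l, 1 ≤ l → l ≤ N - 1 →
      βstar l = (1 / Vu) ^ (N - l) • (prodFrom N n B l).mulVec (βstar N)) ∧
    (l2OpNorm A1 * ∏ l ∈ Finset.Icc 2 N, l2OpNorm (B l) < Vu ^ N →
      ∀ y : Fin (n N) → ℝ,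
        y = (1 / Vu) ^ N • (A1 * prodFrom N n B 1).mulVec y + g → y = βstar N) :=
  stmt3_general N hN n Vu hVu A1 B g βstar hfixN hfixl lam hlam hA1 hB hg
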